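/- arXiv:1902.11015 — 2 statements merged into one kernel-verified Lean document; each statement's English description precedes it below -/
import Mathlib

section
/- If v_i = (v₀ - ω₀ȳ)cos θ̄ + ω₀x̄ sin θ̄ with θ̄ = atan2(ω₀x̄, v₀ - ω₀ȳ), ω₀ ≠ 0, and (x̄, ȳ) ≠ (0, 0), then v_i ≠ v₀ unless (ω₀x̄)² + (ω₀ȳ)² = 2v₀ω₀ȳ; in particular, for a formation that is not a translational straight-line formation (ω₀ ≠ 0) and with offset satisfying x̄² + ȳ² ≠ 2(v₀/ω₀)ȳ, the follower's linear speed differs from the leader's. -/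
/-- The two-argument arctangent: atan2 y x is the angle of the point (x, y). -/
noncomputable def atan2 (y x : ℝ) : ℝ := Complex.arg ⟨x, y⟩

open Real

theorem Complex.re_mul_cos_arg_add_im_mul_sin_arg (z : ℂ) :
    z.re * Real.cos z.arg + z.im * Real.sin z.arg = ‖z‖ := by
  calc z.re * Real.cos z.arg + z.im * Real.sin z.arg
      = ‖z‖ * (Real.cos z.arg ^ 2 + Real.sin z.arg ^ 2) := by
        rw [← Complex.norm_mul_cos_arg, ← Complex.norm_mul_sin_arg]; ring
    _ = ‖z‖ := by rw [Real.cos_sq_add_sin_sq, mul_one]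

theorem mul_cos_atan2_add_mul_sin_atan2 (x y : ℝ) :
    x * cos (atan2 y x) + y * sin (atan2 y x) = √(x ^ 2 + y ^ 2) := by
  rw [sq, sq, ← Complex.normSq_mk, ← Complex.norm_def]
  exact Complex.re_mul_cos_arg_add_im_mul_sin_arg ⟨x, y⟩

theorem stmt_14_general (ω₀ v₀ xb yb : ℝ)
    (h : (ω₀ * xb) ^ 2 + (ω₀ * yb) ^ 2 ≠ 2 * v₀ * ω₀ * yb) :
    (v₀ - ω₀ * yb) * Real.cos (atan2 (ω₀ * xb) (v₀ - ω₀ * yb))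
        + ω₀ * xb * Real.sin (atan2 (ω₀ * xb) (v₀ - ω₀ * yb)) ≠ v₀ := by
  rw [mul_cos_atan2_add_mul_sin_atan2]
  intro hv
  apply h
  have hsq := sq_sqrt (add_nonneg (sq_nonneg (v₀ - ω₀ * yb)) (sq_nonneg (ω₀ * xb)))
  rw [hv] at hsq
  linear_combination -hsq

theorem stmt_14 (ω₀ v₀ xb yb : ℝ) (hω : ω₀ ≠ 0) (hxy : ¬(xb = 0 ∧ yb = 0))
    (h : (ω₀ * xb) ^ 2 + (ω₀ * yb) ^ 2 ≠ 2 * v₀ * ω₀ * yb) :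
    (v₀ - ω₀ * yb) * Real.cos (atan2 (ω₀ * xb) (v₀ - ω₀ * yb))
        + ω₀ * xb * Real.sin (atan2 (ω₀ * xb) (v₀ - ω₀ * yb)) ≠ v₀ :=
  stmt_14_general ω₀ v₀ xb yb h
end

section
/- If all vehicles i = 0,…,n satisfy gᵢ(t) = g₀(t)·ḡ₀ᵢ(t), where each ḡ₀ᵢ(t) ∈ SE(2) has fixed translation part p̄₀ᵢ and rotation part R(θ̄₀ᵢ(t)) with θ̄₀ᵢ(t) possibly time-varying, then the rotation part of gᵢ⁻¹gⱼ equals R(θ̄₀ⱼ(t) - θ̄₀ᵢ(t)) and the relative position p̄ᵢⱼ(t) = R(θ̄₀ᵢ(t))ᵀ(p̄₀ⱼ - p̄₀ᵢ) has constant norm ‖p̄₀ⱼ - p̄₀ᵢ‖ even when θ̄₀ᵢ, θ̄₀ⱼ are time-varying. -/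
open Matrix

/-- An SE(2) element as a 3×3 homogeneous matrix with heading θ and translation (x,y). -/
noncomputable def SE2 (θ x y : ℝ) : Matrix (Fin 3) (Fin 3) ℝ :=
  !![Real.cos θ, -Real.sin θ, x; Real.sin θ, Real.cos θ, y; 0, 0, 1]

/-- Euclidean norm on ℝ². -/
noncomputable def enorm2 (v : Fin 2 → ℝ) : ℝ := Real.sqrt (v 0 ^ 2 + v 1 ^ 2)

lemma SE2_mul (θ x y θ' x' y' : ℝ) :
    SE2 θ x y * SE2 θ' x' y' =
      SE2 (θ + θ') (x + Real.cos θ * x' - Real.sin θ * y')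
        (y + Real.sin θ * x' + Real.cos θ * y') := by
  unfold SE2
  ext i j
  fin_cases i <;> fin_cases j <;>
    simp [Matrix.mul_apply, Fin.sum_univ_three, Real.cos_add, Real.sin_add] <;> ring

lemma SE2_congr {a b c a' b' c' : ℝ} (h1 : a = a') (h2 : b = b') (h3 : c = c') :
    SE2 a b c = SE2 a' b' c' := by rw [h1, h2, h3]

lemma SE2_zero : SE2 0 0 0 = 1 := by
  unfold SE2
  ext i j
  fin_cases i <;> fin_cases j <;> simp [Matrix.one_apply, Matrix.vecHead, Matrix.vecTail]

lemma SE2_inv_mul (θ x y : ℝ) :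
    SE2 (-θ) (-(Real.cos θ * x + Real.sin θ * y)) (Real.sin θ * x - Real.cos θ * y)
      * SE2 θ x y = 1 := by
  rw [SE2_mul, ← SE2_zero]
  have hc := Real.cos_sq_add_sin_sq θ
  apply SE2_congr
  · ring
  · rw [Real.cos_neg, Real.sin_neg]; nlinarith [hc]
  · rw [Real.cos_neg, Real.sin_neg]; nlinarith [hc]

lemma SE2_eq_inv (θ x y : ℝ) :
    (SE2 θ x y)⁻¹ =
      SE2 (-θ) (-(Real.cos θ * x + Real.sin θ * y)) (Real.sin θ * x - Real.cos θ * y) :=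
  inv_eq_left_inv (SE2_inv_mul θ x y)

theorem stmt_16
    (θ₀ x₀ y₀ : ℝ → ℝ)       -- leader trajectory parameters
    (θi θj : ℝ → ℝ)           -- possibly time-varying relative headings
    (xi yi xj yj : ℝ)         -- constant relative positions w.r.t. vehicle 0
    (gi gj : ℝ → Matrix (Fin 3) (Fin 3) ℝ)
    (hgi : ∀ t, gi t = SE2 (θ₀ t) (x₀ t) (y₀ t) * SE2 (θi t) xi yi)
    (hgj : ∀ t, gj t = SE2 (θ₀ t) (x₀ t) (y₀ t) * SE2 (θj t) xj yj) :
    ∀ t : ℝ,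
      (gi t)⁻¹ * gj t
        = SE2 (θj t - θi t)
            (Real.cos (θi t) * (xj - xi) + Real.sin (θi t) * (yj - yi))
            (-Real.sin (θi t) * (xj - xi) + Real.cos (θi t) * (yj - yi))
      ∧ enorm2 ![Real.cos (θi t) * (xj - xi) + Real.sin (θi t) * (yj - yi),
                 -Real.sin (θi t) * (xj - xi) + Real.cos (θi t) * (yj - yi)]
          = enorm2 ![xj - xi, yj - yi] := by
  intro t
  constructor
  · rw [hgi, hgj, SE2_mul, SE2_mul, SE2_eq_inv, SE2_mul]
    have hc := Real.cos_sq_add_sin_sq (θ₀ t)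
    apply SE2_congr
    · ring
    · rw [Real.cos_neg, Real.sin_neg, Real.cos_add, Real.sin_add]
      linear_combination (Real.cos (θi t) * (xj - xi) + Real.sin (θi t) * (yj - yi)) * hc
    · rw [Real.cos_neg, Real.sin_neg, Real.cos_add, Real.sin_add]
      linear_combination (-Real.sin (θi t) * (xj - xi) + Real.cos (θi t) * (yj - yi)) * hc
  · unfold enorm2
    congr 1
    simp only [Matrix.cons_val_zero, Matrix.cons_val_one, Matrix.head_cons]
    have hc := Real.cos_sq_add_sin_sq (θi t)
    nlinarith [hc]
end
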